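/- Let G be an n × n complex matrix such that Re(e^{-iθ}⟨u, Gu⟩) > 0 for all nonzero u ∈ ℂⁿ (i.e., the numerical range of e^{-iθ}G lies in the open right half-plane), for some θ ∈ ℝ. Then for every n × n complex matrix Δ with Re(e^{iθ}⟨u, Δu⟩) ≥ 0 for all u, the matrix I + GΔ is nonsingular. -/
import Mathlib


open scoped BigOperators

/-- Standard inner product on `ℂⁿ`, linear in the second slot. -/
noncomputable def ip {n : ℕ} (u v : Fin n → ℂ) : ℂ := ∑ i, (starRingEnd ℂ) (u i) * v i

/-- Squared Euclidean norm on `ℂⁿ`. -/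
noncomputable def nsq {n : ℕ} (u : Fin n → ℂ) : ℝ := ∑ i, Complex.normSq (u i)

/-- The Davis-Wielandt shell of a matrix. -/
noncomputable def DW {n : ℕ} (M : Matrix (Fin n) (Fin n) ℂ) : Set (ℂ × ℝ) :=
  {p | ∃ u : Fin n → ℂ, u ≠ 0 ∧
    p = (ip u (M.mulVec u) / ((nsq u : ℝ) : ℂ), nsq (M.mulVec u) / nsq u)}

lemma ip_conj {n : ℕ} (u v : Fin n → ℂ) : ip u v = (starRingEnd ℂ) (ip v u) := by
  simp [ip, mul_comm]

theorem small_angle_half_plane {n : ℕ} (θ : ℝ) (G : Matrix (Fin n) (Fin n) ℂ)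
    (hG : ∀ u : Fin n → ℂ, u ≠ 0 →
      0 < (Complex.exp (-(θ : ℂ) * Complex.I) * ip u (G.mulVec u)).re) :
    ∀ Δ : Matrix (Fin n) (Fin n) ℂ,
      (∀ u : Fin n → ℂ, 0 ≤ (Complex.exp ((θ : ℂ) * Complex.I) * ip u (Δ.mulVec u)).re) →
      IsUnit (1 + G * Δ) := by
  intro Δ hΔ
  have key : ∀ u : Fin n → ℂ, (1 + G * Δ).mulVec u = 0 → u = 0 := by
    intro u hu
    by_contra hu0
    set v := Δ.mulVec u with hv
    have hsum : u + G.mulVec v = 0 := by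
      simpa [Matrix.add_mulVec, Matrix.one_mulVec, ← Matrix.mulVec_mulVec] using hu
    have heq : u = -(G.mulVec v) := eq_neg_of_add_eq_zero_left hsum
    have hvne : v ≠ 0 := by
      intro h
      apply hu0
      rw [heq, h, Matrix.mulVec_zero, neg_zero]
    have hipvu : ip v u = - ip v (G.mulVec v) := by
      rw [heq]
      simp [ip, Finset.sum_neg_distrib]
    have hconjexp : Complex.exp ((θ : ℂ) * Complex.I)
        = (starRingEnd ℂ) (Complex.exp (-(θ : ℂ) * Complex.I)) := by
      rw [← Complex.exp_conj]
      norm_num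
    have hmain : Complex.exp ((θ : ℂ) * Complex.I) * ip u v
        = (starRingEnd ℂ) (-(Complex.exp (-(θ : ℂ) * Complex.I) * ip v (G.mulVec v))) := by
      rw [ip_conj u v, hipvu, hconjexp]
      simp [map_mul, mul_comm]
    have h1 := hΔ u
    rw [← hv, hmain] at h1
    have h2 := hG v hvne
    simp only [Complex.conj_re, Complex.neg_re] at h1
    linarith
  rw [← Matrix.mulVec_injective_iff_isUnit]
  intro x y hxy
  have : (1 + G * Δ).mulVec (x - y) = 0 := by
    rw [Matrix.mulVec_sub, hxy, sub_self]
  have := key _ this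
  exact sub_eq_zero.mp this
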